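/- arXiv:1805.07741 — 2 statements merged into one kernel-verified Lean document; each statement's English description precedes it below -/
import Mathlib

section
/- For every n ≥ 0 and real x ≥ 0, e^{−x}·L_n(x) = (1/n!)·d^n/dx^n (e^{−x}·x^n), where L_n is the n-th Laguerre polynomial defined by L_n(x) = Σ_{k=0}^n C(n,k)·(−x)^k/k!. -/
/-!
By the Leibniz rule the `i`-th derivative of `e^{-x}` contributes `(-1)^i e^{-x}` and the
`(n-i)`-th derivative of `x^n` contributes `n!/i! · x^i`, so after dividing by `n!` the `i`-th
Leibniz term is exactly `e^{-x}` times the `i`-th term `C(n,i) (-x)^i / i!` of `L_n(x)`.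
-/

/-- The `n`-th Laguerre polynomial. -/
noncomputable def laguerre (n : ℕ) (x : ℝ) : ℝ :=
  ∑ k ∈ Finset.range (n + 1), (n.choose k : ℝ) * (-x) ^ k / (Nat.factorial k : ℝ)

open Real Finset
open scoped Nat

theorem Nat.factorial_mul_descFactorial_sub {n i : ℕ} (hi : i ≤ n) :
    i ! * n.descFactorial (n - i) = n ! := by
  simpa only [Nat.sub_sub_self hi] using Nat.factorial_mul_descFactorial (Nat.sub_le n i)

theorem iteratedDeriv_exp_neg (i : ℕ) (x : ℝ) :
    iteratedDeriv i (fun y => exp (-y)) x = (-1) ^ i * exp (-x) := by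
  simpa only [neg_one_mul] using congrFun (iteratedDeriv_exp_const_mul i (-1)) x

theorem iteratedDeriv_exp_neg_mul_pow (n m : ℕ) (x : ℝ) :
    iteratedDeriv n (fun y => exp (-y) * y ^ m) x =
      ∑ i ∈ range (n + 1),
        n.choose i * ((-1) ^ i * exp (-x)) * (m.descFactorial (n - i) * x ^ (m - (n - i))) := by
  rw [iteratedDeriv_fun_mul (by fun_prop) (by fun_prop)]
  simp only [iteratedDeriv_exp_neg, iteratedDeriv_pow]

theorem laguerre_rodrigues_general (n : ℕ) (x : ℝ) :
    Real.exp (-x) * laguerre n x =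
      (1 / (Nat.factorial n : ℝ)) *
        iteratedDeriv n (fun y : ℝ => Real.exp (-y) * y ^ n) x := by
  rw [iteratedDeriv_exp_neg_mul_pow, laguerre, mul_sum, mul_sum]
  refine sum_congr rfl fun i hi => ?_
  have hin : i ≤ n := Nat.lt_succ_iff.mp (mem_range.mp hi)
  have hfact : (i ! : ℝ) * n.descFactorial (n - i) = n ! := by
    exact_mod_cast Nat.factorial_mul_descFactorial_sub hin
  rw [Nat.sub_sub_self hin, ← hfact]
  field_simp
  ring

theorem laguerre_rodrigues (n : ℕ) (x : ℝ) (hx : 0 ≤ x) :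
    Real.exp (-x) * laguerre n x =
      (1 / (Nat.factorial n : ℝ)) *
        iteratedDeriv n (fun y : ℝ => Real.exp (-y) * y ^ n) x :=
  laguerre_rodrigues_general n x
end

section
/- Let α be real, T ≥ 2, and Δσ = α/log T. Let H(s) = (1/2)·s·(1−s)·π^{−s/2}·Γ(s/2). Then uniformly for s = σ + it with 1/3 ≤ σ ≤ A (A ≥ 3 fixed) and T ≤ t ≤ 2T, H(s+Δσ) = (e^{α/2} + O_α(1/log T))·H(s). -/
/-!
Write `δ = α / log T`. Then
`H(s + δ) / H(s) = (1 + δ/s) (1 - δ/(1-s)) π^(-δ/2) Γ(s/2 + δ/2) / Γ(s/2)`,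
and the first three factors are `exp O(δ)`. Comparing the Euler–Gauss products of `Γ(z + h)` and
`Γ(z)` term by term gives `Γ(z + h) / Γ(z) = exp (h log z + O(1 / Im z))`: the `j`-th factor is
`1 + h/(z+j) = exp (h (log (z+j+1) - log (z+j)) + O(|z+j|⁻²))`, and the logarithms telescope.
In the region, `log (s/2) = log T + O_A(1)`, so `(δ/2) log (s/2) = α/2 + O(1 / log T)`. This gives
the claim for large `T`; for `T` in a compact range the ratio is bounded by continuity.
-/

open Complex Filter Topology Finset
open scoped Real

lemma sum_range_inv_add_sq_le {a : ℝ} (ha : 1 < a) (n : ℕ) :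
    ∑ j ∈ range n, (((j : ℝ) + a) ^ 2)⁻¹ ≤ (a - 1)⁻¹ := by
  have hstep : ∀ j ∈ range n,
      (((j : ℝ) + a) ^ 2)⁻¹ ≤ ((j : ℝ) + a - 1)⁻¹ - (((j + 1 : ℕ) : ℝ) + a - 1)⁻¹ := by
    intro j _
    have hj : (0 : ℝ) < j + a - 1 := by have := j.cast_nonneg (α := ℝ); linarith
    rw [Nat.cast_succ, inv_sub_inv hj.ne' (by linarith),
      show (j : ℝ) + 1 + a - 1 - (j + a - 1) = 1 by ring, one_div]
    exact inv_anti₀ (by nlinarith) (by nlinarith)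
  calc ∑ j ∈ range n, (((j : ℝ) + a) ^ 2)⁻¹
      ≤ ∑ j ∈ range n, (((j : ℝ) + a - 1)⁻¹ - (((j + 1 : ℕ) : ℝ) + a - 1)⁻¹) := sum_le_sum hstep
    _ = (a - 1)⁻¹ - ((n : ℝ) + a - 1)⁻¹ := by rw [sum_range_sub']; simp
    _ ≤ (a - 1)⁻¹ := sub_le_self _ (inv_nonneg.mpr (by have := n.cast_nonneg (α := ℝ); linarith))

namespace Complex

lemma one_add_ne_zero_of_norm_lt_one {x : ℂ} (hx : ‖x‖ < 1) : 1 + x ≠ 0 := fun h => by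
  rw [eq_neg_of_add_eq_zero_right h, norm_neg, norm_one] at hx
  exact lt_irrefl _ hx

lemma norm_exp_sub_exp_le {w c : ℂ} (h : ‖w - c‖ ≤ 1) :
    ‖exp w - exp c‖ ≤ 2 * ‖exp c‖ * ‖w - c‖ := by
  have : exp w - exp c = exp c * (exp (w - c) - 1) := by
    rw [mul_sub, ← exp_add, add_sub_cancel, mul_one]
  rw [this, norm_mul, mul_comm 2, mul_assoc]
  exact mul_le_mul_of_nonneg_left (norm_exp_sub_one_le h) (norm_nonneg _)

lemma norm_log_one_add_sub_self_le_sq {x : ℂ} (hx : ‖x‖ ≤ 1 / 2) :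
    ‖log (1 + x) - x‖ ≤ ‖x‖ ^ 2 := by
  refine (norm_log_one_add_sub_self_le (by linarith)).trans ?_
  have : (1 - ‖x‖)⁻¹ ≤ 2 := by
    rw [inv_le_comm₀ (by linarith) two_pos]; linarith
  nlinarith [sq_nonneg ‖x‖]

lemma norm_mul_log_one_add_sub_log_one_add_mul_le {u h : ℂ} (hu : ‖u‖ ≤ 1 / 2) (hh : ‖h‖ ≤ 1) :
    ‖h * log (1 + u) - log (1 + h * u)‖ ≤ 2 * ‖u‖ ^ 2 := by
  have hhu : ‖h * u‖ ≤ 1 / 2 := by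
    rw [norm_mul]; nlinarith [norm_nonneg u, norm_nonneg h]
  have hsplit : h * log (1 + u) - log (1 + h * u) =
      h * (log (1 + u) - u) - (log (1 + h * u) - h * u) := by ring
  calc ‖h * log (1 + u) - log (1 + h * u)‖
      ≤ ‖h‖ * ‖log (1 + u) - u‖ + ‖log (1 + h * u) - h * u‖ := by
        rw [hsplit, ← norm_mul]; exact norm_sub_le _ _
    _ ≤ 1 * ‖u‖ ^ 2 + ‖h * u‖ ^ 2 := by
        gcongr
        exacts [norm_log_one_add_sub_self_le_sq hu, norm_log_one_add_sub_self_le_sq hhu]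
    _ ≤ 2 * ‖u‖ ^ 2 := by
        rw [norm_mul, mul_pow]
        nlinarith [sq_nonneg ‖u‖, pow_le_one₀ (norm_nonneg h) hh (n := 2)]

lemma log_add_one_sub_log {w : ℂ} (hw : 0 < w.im) : log (w + 1) - log w = log (1 + w⁻¹) := by
  have hw0 : w ≠ 0 := fun h => by simp [h] at hw
  have hinv : (1 + w⁻¹).im < 0 := by
    simpa [inv_im, neg_div] using div_pos hw (normSq_pos.mpr hw0)
  have hne : 1 + w⁻¹ ≠ 0 := fun h => by simp [h] at hinv
  have harg : arg w + arg (1 + w⁻¹) ∈ Set.Ioc (-π) π := by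
    have := arg_nonneg_iff.mpr hw.le
    constructor <;>
      linarith [arg_le_pi w, neg_pi_lt_arg (1 + w⁻¹), arg_neg_iff.mpr hinv]
  rw [sub_eq_iff_eq_add', ← log_mul hw0 hne harg, mul_add, mul_one, mul_inv_cancel₀ hw0]

lemma norm_log_sub_ofReal_log_le {z : ℂ} {r c : ℝ} (hr : 0 < r) (hc : 1 ≤ c)
    (hlo : r / c ≤ ‖z‖) (hhi : ‖z‖ ≤ c * r) : ‖log z - Real.log r‖ ≤ Real.log c + π := by
  have hz : 0 < ‖z‖ := (div_pos hr (by linarith)).trans_le hlo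
  have hre : |Real.log ‖z‖ - Real.log r| ≤ Real.log c := by
    have h1 := Real.log_le_log (div_pos hr (by linarith)) hlo
    have h2 := Real.log_le_log hz hhi
    rw [Real.log_div hr.ne' (by linarith)] at h1
    rw [Real.log_mul (by linarith) hr.ne'] at h2
    rw [abs_le]; constructor <;> linarith
  calc ‖log z - Real.log r‖ ≤ |(log z - Real.log r).re| + |(log z - Real.log r).im| :=
        norm_le_abs_re_add_abs_im _
    _ ≤ Real.log c + π := by
        simp only [sub_re, sub_im, log_re, log_im, ofReal_re, ofReal_im, sub_zero]
        exact add_le_add hre (abs_arg_le_pi z)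

lemma norm_log_div_two_sub_log_le {A T : ℝ} {s : ℂ} (hT : 1 ≤ T) (hre : 0 ≤ s.re)
    (hreA : s.re ≤ A) (hTim : T ≤ s.im) (himT : s.im ≤ 2 * T) :
    ‖log (s / 2) - Real.log T‖ ≤ Real.log (|A| + 2) + π := by
  have hs := norm_le_abs_re_add_abs_im s
  rw [abs_of_nonneg hre, abs_of_pos (by linarith)] at hs
  have hTs : T ≤ ‖s‖ := hTim.trans ((le_abs_self _).trans (abs_im_le_norm s))
  refine norm_log_sub_ofReal_log_le (by linarith) (by linarith [abs_nonneg A]) ?_ ?_ <;>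
    rw [norm_div, RCLike.norm_ofNat]
  · exact div_le_div₀ (by linarith) hTs two_pos (by linarith [abs_nonneg A])
  · nlinarith [le_abs_self A]

lemma norm_log_ofReal_pi_le : ‖log (π : ℂ)‖ ≤ 3 := by
  rw [← ofReal_log Real.pi_pos.le, norm_real, Real.norm_of_nonneg
    (Real.log_nonneg (by linarith [Real.pi_gt_three]))]
  linarith [Real.log_le_sub_one_of_pos Real.pi_pos, Real.pi_lt_four]

lemma norm_inv_add_natCast_le {z : ℂ} (him : 0 < z.im) (j : ℕ) : ‖(z + j)⁻¹‖ ≤ z.im⁻¹ := by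
  rw [norm_inv]
  exact inv_anti₀ him ((le_abs_self _).trans (by simpa using abs_im_le_norm (z + j)))

lemma norm_inv_add_natCast_sq_le {z : ℂ} (hre : 0 ≤ z.re) (him : 0 < z.im) (j : ℕ) :
    ‖(z + j)⁻¹‖ ^ 2 ≤ 2 * (((j : ℝ) + z.im) ^ 2)⁻¹ := by
  have hsq : ‖z + j‖ ^ 2 = (z.re + j) ^ 2 + z.im ^ 2 := by
    rw [Complex.sq_norm, normSq_apply]; simp; ring
  have hj := j.cast_nonneg (α := ℝ)
  rw [norm_inv, inv_pow, ← div_eq_mul_inv, inv_le_comm₀ (by rw [hsq]; positivity) (by positivity),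
    hsq, inv_div, div_le_iff₀ two_pos]
  nlinarith [sq_nonneg (j - z.im), mul_nonneg hre (by linarith : (0:ℝ) ≤ z.re + 2 * j)]

lemma sum_range_log_one_add_inv {z : ℂ} (him : 0 < z.im) (n : ℕ) :
    ∑ j ∈ range n, log (1 + (z + j)⁻¹) = log (z + n) - log z := by
  have hstep : ∀ j : ℕ, log (z + (j + 1 : ℕ)) - log (z + j) = log (1 + (z + j)⁻¹) := fun j => by
    rw [Nat.cast_succ, ← add_assoc]
    exact log_add_one_sub_log (by simpa using him)
  simp_rw [← hstep]
  rw [sum_range_sub (fun j : ℕ => log (z + j))]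
  simp

lemma tendsto_log_add_natCast_sub_log_natCast (z : ℂ) :
    Tendsto (fun n : ℕ => log (z + n) - log n) atTop (𝓝 0) := by
  have hquot : Tendsto (fun n : ℕ => 1 + z / n) atTop (𝓝 1) := by
    simpa using (tendsto_const_div_atTop_nhds_zero_nat z).const_add 1
  have hlog : Tendsto (fun n : ℕ => log (1 + z / n)) atTop (𝓝 0) := by
    simpa [Function.comp_def] using (continuousAt_clog (by simp)).tendsto.comp hquot
  refine hlog.congr' ?_
  filter_upwards [hquot.eventually_ne one_ne_zero, eventually_ne_atTop 0] with n hne hn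
  have hmul : z + n = ((n : ℝ) : ℂ) * (1 + z / n) := by
    push_cast; field_simp; ring
  rw [hmul, log_ofReal_mul (by positivity) hne, natCast_log, add_sub_cancel_left]

lemma GammaSeq_add {z : ℂ} (hz : ∀ j : ℕ, z + j ≠ 0) (h : ℂ) {n : ℕ} (hn : n ≠ 0) :
    GammaSeq (z + h) n = (n : ℂ) ^ h * GammaSeq z n / ∏ j ∈ range (n + 1), (1 + h * (z + j)⁻¹) := by
  have hprod : ∏ j ∈ range (n + 1), (z + h + j) =
      (∏ j ∈ range (n + 1), (z + j)) * ∏ j ∈ range (n + 1), (1 + h * (z + j)⁻¹) := by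
    rw [← prod_mul_distrib]
    refine prod_congr rfl fun j _ => ?_
    field_simp [hz j]
    ring
  rw [GammaSeq, GammaSeq, hprod, cpow_add _ _ (Nat.cast_ne_zero.mpr hn)]
  field_simp

lemma GammaSeq_add_eq_exp_mul {z h : ℂ} (him : 0 < z.im)
    (hh : ∀ j : ℕ, ‖h * (z + j)⁻¹‖ < 1) {n : ℕ} (hn : n ≠ 0) :
    GammaSeq (z + h) n = exp (h * log z +
        ∑ j ∈ range (n + 1), (h * log (1 + (z + j)⁻¹) - log (1 + h * (z + j)⁻¹))) *
      (exp (h * (log n - log (z + 1 + n))) * GammaSeq z n) := by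
  have hz : ∀ j : ℕ, z + j ≠ 0 := fun j hj => him.ne' (by simpa using congrArg im hj)
  have hprod : ∏ j ∈ range (n + 1), (1 + h * (z + j)⁻¹) =
      exp (∑ j ∈ range (n + 1), log (1 + h * (z + j)⁻¹)) := by
    rw [exp_sum]
    exact prod_congr rfl fun j _ => (exp_log (one_add_ne_zero_of_norm_lt_one (hh j))).symm
  rw [GammaSeq_add hz h hn, hprod, cpow_def_of_ne_zero (Nat.cast_ne_zero.mpr hn),
    div_eq_mul_inv, ← exp_neg, mul_right_comm, ← exp_add, ← mul_assoc, ← exp_add]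
  congr 2
  rw [sum_sub_distrib, ← mul_sum, sum_range_log_one_add_inv him, Nat.cast_succ, ← add_assoc,
    add_right_comm z]
  ring

lemma norm_sum_range_mul_log_one_add_sub_log_le {z h : ℂ} (hre : 0 ≤ z.re) (him : 2 ≤ z.im)
    (hh : ‖h‖ ≤ 1) (n : ℕ) :
    ‖∑ j ∈ range n, (h * log (1 + (z + j)⁻¹) - log (1 + h * (z + j)⁻¹))‖ ≤ 4 / (z.im - 1) := calc
  _ ≤ ∑ j ∈ range n, 2 * (2 * (((j : ℝ) + z.im) ^ 2)⁻¹) := by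
    refine (norm_sum_le _ _).trans (sum_le_sum fun j _ => ?_)
    have hu : ‖(z + j)⁻¹‖ ≤ 1 / 2 :=
      (norm_inv_add_natCast_le (by linarith) j).trans (by rw [one_div]; gcongr)
    exact (norm_mul_log_one_add_sub_log_one_add_mul_le hu hh).trans
      (by gcongr; exact norm_inv_add_natCast_sq_le hre (by linarith) j)
  _ ≤ 4 / (z.im - 1) := by
    rw [← mul_sum, ← mul_sum, ← mul_assoc, div_eq_mul_inv]
    gcongr
    exacts [by norm_num, sum_range_inv_add_sq_le (by linarith) _]

theorem exists_Gamma_add_eq_exp_mul {z h : ℂ} (hre : 0 ≤ z.re) (him : 2 ≤ z.im) (hh : ‖h‖ ≤ 1) :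
    ∃ R : ℂ, ‖R‖ ≤ 4 / (z.im - 1) ∧ Gamma (z + h) = exp (h * log z + R) * Gamma z := by
  have him0 : 0 < z.im := by linarith
  set R : ℕ → ℂ := fun n =>
    ∑ j ∈ range (n + 1), (h * log (1 + (z + j)⁻¹) - log (1 + h * (z + j)⁻¹))
  have hhu : ∀ j : ℕ, ‖h * (z + j)⁻¹‖ < 1 := fun j => by
    have hu := (norm_inv_add_natCast_le him0 j).trans (inv_anti₀ two_pos him)
    rw [norm_mul]
    nlinarith [norm_nonneg h, norm_nonneg (z + j)⁻¹]
  have hΓ : Gamma z ≠ 0 := Gamma_ne_zero fun m hm => by simpa [hm] using him0.ne'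
  have hy : Tendsto (fun n : ℕ => exp (h * (log n - log (z + 1 + n))) * GammaSeq z n) atTop
      (𝓝 (Gamma z)) := by
    simpa using ((tendsto_log_add_natCast_sub_log_natCast (z + 1)).neg.const_mul h).cexp.mul
      (GammaSeq_tendsto_Gamma z)
  have hlim : Tendsto (fun n => exp (h * log z + R n)) atTop (𝓝 (Gamma (z + h) / Gamma z)) := by
    refine ((GammaSeq_tendsto_Gamma (z + h)).div hy hΓ).congr' ?_
    filter_upwards [hy.eventually_ne hΓ, eventually_ne_atTop 0] with n hy0 hn
    rw [Pi.div_apply, GammaSeq_add_eq_exp_mul him0 hhu hn, mul_div_cancel_right₀ _ hy0]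
  -- `R n` need not converge, but it stays in a closed ball, whose image under
  -- `w ↦ exp (h * log z + w)` is compact.
  have hclosed :
      IsClosed ((fun w => exp (h * log z + w)) '' Metric.closedBall 0 (4 / (z.im - 1))) :=
    ((isCompact_closedBall _ _).image (by fun_prop)).isClosed
  obtain ⟨R₀, hR₀, hR₀eq⟩ := hclosed.mem_of_tendsto hlim (Eventually.of_forall fun n =>
    ⟨R n, by simpa only [Metric.mem_closedBall, dist_zero_right] using
      norm_sum_range_mul_log_one_add_sub_log_le hre him hh (n + 1), rfl⟩)
  exact ⟨R₀, by simpa using hR₀, ((eq_div_iff hΓ).mp hR₀eq).symm⟩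

end Complex

/-- The factor `H` of the paper, with `ξ(s) = H(s) ζ(s)`. -/
noncomputable def xiFactor (s : ℂ) : ℂ := 1 / 2 * s * (1 - s) * (π : ℂ) ^ (-s / 2) * Gamma (s / 2)

lemma div_two_ne_neg_natCast {s : ℂ} (hs : s.im ≠ 0) (m : ℕ) : s / 2 ≠ -m := fun h =>
  hs (by simpa using congrArg (fun w => 2 * im w) h)

lemma xiFactor_ne_zero {s : ℂ} (hs : s.im ≠ 0) : xiFactor s ≠ 0 := by
  have hs0 : s ≠ 0 := fun h => hs (by simp [h])
  have hs1 : 1 - s ≠ 0 := fun h => hs (by simpa using congrArg im h)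
  refine mul_ne_zero (mul_ne_zero (mul_ne_zero (mul_ne_zero (by norm_num) hs0) hs1) ?_)
    (Gamma_ne_zero (div_two_ne_neg_natCast hs))
  rw [cpow_def_of_ne_zero (ofReal_ne_zero.mpr Real.pi_ne_zero)]
  exact exp_ne_zero _

lemma continuousAt_xiFactor {s : ℂ} (hs : s.im ≠ 0) : ContinuousAt xiFactor s := by
  have hΓ : ContinuousAt (fun w : ℂ => Gamma (w / 2)) s :=
    ((differentiableAt_Gamma _ (div_two_ne_neg_natCast hs)).continuousAt).comp
      (f := fun w : ℂ => w / 2) (by fun_prop)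
  unfold xiFactor
  simp_rw [cpow_def_of_ne_zero (ofReal_ne_zero.mpr Real.pi_ne_zero)]
  fun_prop

lemma xiFactor_add {s : ℂ} (hs : s.im ≠ 0) (δ : ℂ) :
    xiFactor (s + δ) = (1 + δ / s) * (1 - δ / (1 - s)) * (π : ℂ) ^ (-δ / 2) *
      (Gamma (s / 2 + δ / 2) / Gamma (s / 2)) * xiFactor s := by
  have hs0 : s ≠ 0 := fun h => hs (by simp [h])
  have hs1 : 1 - s ≠ 0 := fun h => hs (by simpa using congrArg im h)
  have hΓ := Gamma_ne_zero (div_two_ne_neg_natCast hs)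
  unfold xiFactor
  rw [show -(s + δ) / 2 = -s / 2 + -δ / 2 by ring,
    cpow_add _ _ (ofReal_ne_zero.mpr Real.pi_ne_zero), add_div]
  field_simp
  ring

lemma one_add_ofReal_div_ne_zero (δ : ℝ) {w : ℂ} (hw : w.im ≠ 0) : 1 + δ / w ≠ 0 := by
  have hw0 : w ≠ 0 := fun h => hw (by simp [h])
  rw [← div_self hw0, ← add_div]
  exact div_ne_zero (fun h => hw (by simpa using congrArg im h)) hw0

lemma norm_log_one_add_ofReal_div_le {δ : ℝ} {w : ℂ} (hδ : |δ| ≤ 1) (hw : 2 ≤ ‖w‖) :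
    ‖log (1 + δ / w)‖ ≤ 3 / 4 * |δ| := by
  have h : ‖(δ : ℂ) / w‖ ≤ |δ| / 2 := by
    rw [norm_div, norm_real, Real.norm_eq_abs]
    exact div_le_div_of_nonneg_left (abs_nonneg _) two_pos hw
  exact (norm_log_one_add_half_le_self (h.trans (by linarith))).trans (by linarith)

lemma xiFactor_add_ofReal_eq_exp_mul {s R : ℂ} {δ : ℝ} (hs : s.im ≠ 0)
    (hΓ : Gamma (s / 2 + δ / 2) = exp (δ / 2 * log (s / 2) + R) * Gamma (s / 2)) :
    xiFactor (s + δ) = exp (log (1 + δ / s) + log (1 + (-δ : ℝ) / (1 - s)) + log π * (-δ / 2) +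
      (δ / 2 * log (s / 2) + R)) * xiFactor s := by
  rw [xiFactor_add hs, hΓ, mul_div_cancel_right₀ _ (Gamma_ne_zero (div_two_ne_neg_natCast hs)),
    cpow_def_of_ne_zero (ofReal_ne_zero.mpr Real.pi_ne_zero)]
  simp only [exp_add]
  rw [exp_log (one_add_ofReal_div_ne_zero δ hs),
    exp_log (one_add_ofReal_div_ne_zero (-δ) (by simpa using hs))]
  push_cast
  ring

lemma exists_xiFactor_add_ofReal_eq_exp_mul {s : ℂ} {δ : ℝ} (hre : 0 ≤ s.re) (him : 4 ≤ s.im)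
    (hδ : |δ| ≤ 1) :
    ∃ E : ℂ, ‖E‖ ≤ 3 * |δ| + 16 / s.im ∧
      xiFactor (s + δ) = exp (δ / 2 * log (s / 2) + E) * xiFactor s := by
  obtain ⟨R, hR, hΓ⟩ := exists_Gamma_add_eq_exp_mul (z := s / 2) (h := (δ : ℂ) / 2)
    (by simp; linarith) (by simp; linarith) (by simp; linarith [abs_le.mp hδ])
  refine ⟨log (1 + δ / s) + log (1 + (-δ : ℝ) / (1 - s)) + log π * (-δ / 2) + R, ?_, ?_⟩
  · have hs : 2 ≤ ‖s‖ := by linarith [le_abs_self s.im, abs_im_le_norm s]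
    have hs₁ : 2 ≤ ‖1 - s‖ := by
      have := abs_im_le_norm (1 - s)
      rw [sub_im, one_im, zero_sub, abs_neg] at this
      linarith [le_abs_self s.im]
    calc _ ≤ ‖log (1 + δ / s)‖ + ‖log (1 + (-δ : ℝ) / (1 - s))‖ + ‖log π‖ * ‖-(δ : ℂ) / 2‖ +
          ‖R‖ := by rw [← norm_mul]; exact norm_add₄_le
      _ ≤ 3 / 4 * |δ| + 3 / 4 * |-δ| + 3 * (|δ| / 2) + 16 / s.im := by
          gcongr
          · exact norm_log_one_add_ofReal_div_le hδ hs
          · exact norm_log_one_add_ofReal_div_le (by rwa [abs_neg]) hs₁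
          · exact norm_log_ofReal_pi_le
          · simp
          · calc ‖R‖ ≤ 4 / (s.im / 2 - 1) := by simpa using hR
              _ ≤ 16 / s.im := by rw [div_le_div_iff₀ (by linarith) (by linarith)]; linarith
      _ = 3 * |δ| + 16 / s.im := by rw [abs_neg]; ring
  · rw [xiFactor_add_ofReal_eq_exp_mul (by linarith) hΓ]
    congr 2
    ring

lemma norm_xiFactor_add_div_sub_exp_le {α A T : ℝ}
    (hK : |α| * (5 + Real.log (|A| + 2)) + 16 ≤ Real.log T) {s : ℂ}
    (hre : 0 ≤ s.re) (hreA : s.re ≤ A) (hTim : T ≤ s.im) (himT : s.im ≤ 2 * T) :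
    ‖xiFactor (s + (α / Real.log T : ℝ)) / xiFactor s - Real.exp (α / 2)‖ ≤
      2 * Real.exp (α / 2) * (|α| * (5 + Real.log (|A| + 2)) + 16) / Real.log T := by
  have hA : 0 ≤ Real.log (|A| + 2) := Real.log_nonneg (by linarith [abs_nonneg A])
  have hα : |α| ≤ |α| * (5 + Real.log (|A| + 2)) := by nlinarith [abs_nonneg α]
  have hlogT : 16 ≤ Real.log T := by linarith [abs_nonneg α]
  have hT : 4 ≤ T := by
    have hT0 : 0 < T := lt_of_le_of_ne (by linarith) fun h => by norm_num [← h] at hlogT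
    linarith [Real.add_one_le_exp (Real.log T), Real.exp_log hT0]
  set δ : ℝ := α / Real.log T with hδ_def
  have hδα : |δ| = |α| / Real.log T := by
    rw [hδ_def, abs_div, abs_of_pos (show 0 < Real.log T by linarith)]
  obtain ⟨E, hE, hEeq⟩ := exists_xiFactor_add_ofReal_eq_exp_mul hre (hT.trans hTim)
    (by rw [hδα]; exact div_le_one_of_le₀ (by linarith) (by linarith))
  have hW : ‖δ / 2 * log (s / 2) + E - (α / 2 : ℝ)‖ ≤
      (|α| * (5 + Real.log (|A| + 2)) + 16) / Real.log T := by
    have hsplit :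
        δ / 2 * log (s / 2) + E - (α / 2 : ℝ) = δ / 2 * (log (s / 2) - Real.log T) + E := by
      have hL : (Real.log T : ℂ) ≠ 0 := ofReal_ne_zero.mpr (by linarith)
      rw [hδ_def]; push_cast; field_simp; ring
    calc _ ≤ ‖(δ : ℂ) / 2‖ * ‖log (s / 2) - Real.log T‖ + ‖E‖ := by
          rw [hsplit, ← norm_mul]; exact norm_add_le _ _
      _ ≤ |δ| / 2 * (Real.log (|A| + 2) + 4) + (3 * |δ| + 16 / Real.log T) := by
          gcongr
          · simp
          · exact (norm_log_div_two_sub_log_le (by linarith) hre hreA hTim himT).trans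
              (by linarith [Real.pi_lt_four])
          · refine hE.trans (by gcongr; linarith [Real.log_le_sub_one_of_pos (by linarith : 0 < T)])
      _ ≤ |δ| * (5 + Real.log (|A| + 2)) + 16 / Real.log T := by
          linarith [mul_nonneg (abs_nonneg δ) hA, abs_nonneg δ]
      _ = _ := by rw [hδα]; ring
  rw [hEeq, mul_div_cancel_right₀ _ (xiFactor_ne_zero (by linarith)), ofReal_exp]
  refine (norm_exp_sub_exp_le (hW.trans ((div_le_one (by linarith)).mpr hK))).trans ?_
  rw [norm_exp_ofReal, mul_div_assoc]
  gcongr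

lemma exists_norm_xiFactor_add_div_le {S : Set ℂ} (hS : IsCompact S) (hS0 : ∀ s ∈ S, s.im ≠ 0)
    (α : ℝ) {a : ℝ} (ha : 1 < a) (b : ℝ) :
    ∃ M, ∀ T ∈ Set.Icc a b, ∀ s ∈ S, ‖xiFactor (s + (α / Real.log T : ℝ)) / xiFactor s‖ ≤ M := by
  have hcont : ContinuousOn
      (fun p : ℝ × ℂ => xiFactor (p.2 + (α / Real.log p.1 : ℝ)) / xiFactor p.2)
      (Set.Icc a b ×ˢ S) := by
    rintro ⟨T, s⟩ ⟨hT, hs⟩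
    have hT0 : T ≠ 0 := by linarith [hT.1]
    have hlog : Real.log T ≠ 0 := (Real.log_pos (by linarith [hT.1])).ne'
    refine ContinuousAt.continuousWithinAt (ContinuousAt.div ?_
      ((continuousAt_xiFactor (hS0 s hs)).comp' continuousAt_snd) (xiFactor_ne_zero (hS0 s hs)))
    exact (continuousAt_xiFactor (by simpa using hS0 s hs)).comp'
      (f := fun p : ℝ × ℂ => p.2 + (α / Real.log p.1 : ℝ)) (by fun_prop (disch := assumption))
  obtain ⟨M, hM⟩ := (isCompact_Icc.prod hS).exists_bound_of_continuousOn hcont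
  exact ⟨M, fun T hT s hs => hM (T, s) ⟨hT, hs⟩⟩

lemma exists_norm_xiFactor_add_div_le_of_le (α A T₀ : ℝ) :
    ∃ M, ∀ T, 2 ≤ T → T ≤ T₀ → ∀ s : ℂ, 0 ≤ s.re → s.re ≤ A → T ≤ s.im → s.im ≤ 2 * T →
      ‖xiFactor (s + (α / Real.log T : ℝ)) / xiFactor s‖ ≤ M := by
  obtain ⟨M, hM⟩ := exists_norm_xiFactor_add_div_le ((isCompact_Icc (a := 0) (b := A)).reProdIm
    (isCompact_Icc (a := 2) (b := 2 * T₀))) (fun s hs => by linarith [hs.2.1]) α one_lt_two T₀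
  exact ⟨M, fun T hT hT₀ s h₁ h₂ h₃ h₄ =>
    hM T ⟨hT, hT₀⟩ s ⟨⟨h₁, h₂⟩, by linarith, by linarith⟩⟩

theorem H_translation_asymptotic_general (α A : ℝ)
    (H : ℂ → ℂ)
    (hH : ∀ s : ℂ, H s = (1/2 : ℂ) * s * (1 - s) * (Real.pi : ℂ) ^ (-s / 2) *
      Complex.Gamma (s / 2)) :
    ∃ C : ℝ, 0 < C ∧ ∀ T : ℝ, 2 ≤ T → ∀ s : ℂ,
      1/3 ≤ s.re → s.re ≤ A → T ≤ s.im → s.im ≤ 2 * T →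
      ∃ E : ℂ, ‖E‖ ≤ C / Real.log T ∧
        H (s + ((α / Real.log T : ℝ) : ℂ)) = ((Real.exp (α / 2) : ℂ) + E) * H s := by
  obtain rfl : H = xiFactor := funext hH
  set K := |α| * (5 + Real.log (|A| + 2)) + 16
  have hK : 0 < K := by
    have := Real.log_nonneg (by linarith [abs_nonneg A] : 1 ≤ |A| + 2)
    positivity
  obtain ⟨M, hM⟩ := exists_norm_xiFactor_add_div_le_of_le α A (Real.exp K)
  refine ⟨max (2 * Real.exp (α / 2) * K) ((M + Real.exp (α / 2)) * K),
    lt_max_of_lt_left (by positivity), fun T hT s hs₁ hs₂ hs₃ hs₄ => ?_⟩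
  have hlogT : 0 < Real.log T := Real.log_pos (by linarith)
  refine ⟨xiFactor (s + (α / Real.log T : ℝ)) / xiFactor s - Real.exp (α / 2), ?_, by
    rw [add_sub_cancel, div_mul_cancel₀ _ (xiFactor_ne_zero (by linarith))]⟩
  rcases le_or_gt (Real.exp K) T with hT₀ | hT₀
  · exact (norm_xiFactor_add_div_sub_exp_le ((Real.le_log_iff_exp_le (by linarith)).mpr hT₀)
      (by linarith) hs₂ hs₃ hs₄).trans (div_le_div_of_nonneg_right (le_max_left _ _) hlogT.le)
  · have hlogT₀ : Real.log T ≤ K := (Real.log_le_iff_le_exp (by linarith)).mpr hT₀.le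
    have hbound := hM T hT hT₀.le s (by linarith) hs₂ hs₃ hs₄
    calc _ ≤ M + Real.exp (α / 2) := (norm_sub_le _ _).trans (by
          rw [norm_real, Real.norm_of_nonneg (Real.exp_nonneg _)]; linarith)
      _ ≤ (M + Real.exp (α / 2)) * K / Real.log T := by
          rw [le_div_iff₀ hlogT]
          gcongr
          exact add_nonneg ((norm_nonneg _).trans hbound) (Real.exp_pos _).le
      _ ≤ _ := div_le_div_of_nonneg_right (le_max_right _ _) hlogT.le

theorem H_translation_asymptotic (α A : ℝ) (hA : 3 ≤ A)
    (H : ℂ → ℂ)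
    (hH : ∀ s : ℂ, H s = (1/2 : ℂ) * s * (1 - s) * (Real.pi : ℂ) ^ (-s / 2) *
      Complex.Gamma (s / 2)) :
    ∃ C : ℝ, 0 < C ∧ ∀ T : ℝ, 2 ≤ T → ∀ s : ℂ,
      1/3 ≤ s.re → s.re ≤ A → T ≤ s.im → s.im ≤ 2 * T →
      ∃ E : ℂ, ‖E‖ ≤ C / Real.log T ∧
        H (s + ((α / Real.log T : ℝ) : ℂ)) = ((Real.exp (α / 2) : ℂ) + E) * H s :=
  H_translation_asymptotic_general α A H hH
end
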